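/- The maximum fidelity of the single-photon Fock state |1⟩ with a pure single-mode Gaussian state equals 3√3/(4e) ≈ 0.478; equivalently, sup over squeezed displaced vacua S(ξ)D(α)|0⟩ of |⟨1| S(ξ) D(α) |0⟩|² = 3√3/(4e). -/

import Mathlib

open Complex

/-- The stellar function of the pure Gaussian state `S(ξ)D(α)|0⟩` with `ξ = r e^{iθ}`:
`F*(z) = (1/√cosh r)·exp(−(1/2)e^{−iθ} tanh r·z² + (α/cosh r)z
  + (1/2)e^{iθ} tanh r·α² − |α|²/2)`. -/
noncomputable def gaussianStellar (r θ : ℝ) (α : ℂ) (z : ℂ) : ℂ :=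
  (1 / (Real.sqrt (Real.cosh r) : ℂ)) *
    Complex.exp (-(1 / 2) * Complex.exp (-(θ * I)) * (Real.tanh r : ℂ) * z ^ 2 +
      (α / (Real.cosh r : ℂ)) * z +
      (1 / 2) * Complex.exp (θ * I) * (Real.tanh r : ℂ) * α ^ 2 -
      (‖α‖ ^ 2 : ℂ) / 2)

/-! Since `F*` is a Gaussian `C·exp q(z)`, `F*'(0) = F*(0)·α/cosh r`, so the fidelity is
`|α|²/cosh³ r · exp(tanh r · Re(e^{iθ}α²) − |α|²)`. With `s = |α|²` and `t = |tanh r|` it is at most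
`s·e^{−(1−t)s}/cosh³ r ≤ 1/(e(1−t)cosh³ r)`, and since `cosh² r = 1/(1−t²)` the square of the
reciprocal of `(1−t)cosh³ r` is `(1−t)(1+t)³ ≤ 27/16`. Equality holds for `tanh r = 1/2`,
`α = √2`, `θ = 0`. -/

theorem hasDerivAt_gaussianStellar (r θ : ℝ) (α z : ℂ) :
    HasDerivAt (gaussianStellar r θ α) (gaussianStellar r θ α z *
      (-(Complex.exp (-(θ * I)) * Real.tanh r * z) + α / Real.cosh r)) z := by
  have hq : HasDerivAt (fun z : ℂ =>
      -(1 / 2) * Complex.exp (-(θ * I)) * (Real.tanh r : ℂ) * z ^ 2 +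
        (α / (Real.cosh r : ℂ)) * z + (1 / 2) * Complex.exp (θ * I) * (Real.tanh r : ℂ) * α ^ 2 -
        (‖α‖ ^ 2 : ℂ) / 2)
      (-(Complex.exp (-(θ * I)) * Real.tanh r * z) + α / Real.cosh r) z := by
    have h := ((((hasDerivAt_pow 2 z).const_mul
      (-(1 / 2) * Complex.exp (-(θ * I)) * (Real.tanh r : ℂ))).add
      ((hasDerivAt_id z).const_mul (α / (Real.cosh r : ℂ)))).add_const
      ((1 / 2) * Complex.exp (θ * I) * (Real.tanh r : ℂ) * α ^ 2)).sub_const ((‖α‖ ^ 2 : ℂ) / 2)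
    exact h.congr_deriv (by push_cast; ring)
  exact (hq.cexp.const_mul (1 / (Real.sqrt (Real.cosh r) : ℂ))).congr_deriv
    (by simp only [gaussianStellar]; ring)

theorem deriv_gaussianStellar_zero (r θ : ℝ) (α : ℂ) :
    deriv (gaussianStellar r θ α) 0 = gaussianStellar r θ α 0 * (α / Real.cosh r) := by
  simp [(hasDerivAt_gaussianStellar r θ α 0).deriv]

theorem norm_gaussianStellar_zero_sq (r θ : ℝ) (α : ℂ) :
    ‖gaussianStellar r θ α 0‖ ^ 2 =
      Real.exp (Real.tanh r * (Complex.exp (θ * I) * α ^ 2).re - ‖α‖ ^ 2) / Real.cosh r := by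
  have hc := Real.cosh_pos r
  have hre : ((1 / 2) * Complex.exp (θ * I) * (Real.tanh r : ℂ) * α ^ 2 -
      (‖α‖ ^ 2 : ℂ) / 2).re = (Real.tanh r * (Complex.exp (θ * I) * α ^ 2).re - ‖α‖ ^ 2) / 2 := by
    rw [show (1 / 2) * Complex.exp (θ * I) * (Real.tanh r : ℂ) * α ^ 2 =
      ((Real.tanh r / 2 : ℝ) : ℂ) * (Complex.exp (θ * I) * α ^ 2) by push_cast; ring]
    rw [Complex.sub_re, Complex.re_ofReal_mul]
    simp only [← Complex.ofReal_pow, Complex.div_ofNat_re, Complex.ofReal_re]; ring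
  simp only [gaussianStellar, norm_mul, Complex.norm_exp, norm_div, norm_one, Complex.norm_real,
    Real.norm_of_nonneg (Real.sqrt_nonneg _), mul_pow, div_pow, Real.sq_sqrt hc.le]
  simp only [zero_pow two_ne_zero, mul_zero, zero_add, hre, ← Real.exp_nat_mul]
  push_cast; field_simp

theorem norm_deriv_gaussianStellar_zero_sq (r θ : ℝ) (α : ℂ) :
    ‖deriv (gaussianStellar r θ α) 0‖ ^ 2 = ‖α‖ ^ 2 / Real.cosh r ^ 3 *
      Real.exp (Real.tanh r * (Complex.exp (θ * I) * α ^ 2).re - ‖α‖ ^ 2) := by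
  have hc := Real.cosh_pos r
  rw [deriv_gaussianStellar_zero, norm_mul, mul_pow, norm_gaussianStellar_zero_sq, norm_div,
    Complex.norm_real, Real.norm_of_nonneg hc.le]
  field_simp

theorem abs_re_exp_mul_I_mul_sq_le (θ : ℝ) (α : ℂ) :
    |(Complex.exp (θ * I) * α ^ 2).re| ≤ ‖α‖ ^ 2 := by
  have h := Complex.abs_re_le_norm (Complex.exp (θ * I) * α ^ 2)
  rwa [norm_mul, norm_pow, Complex.norm_exp_ofReal_mul_I, one_mul] at h

theorem Real.mul_exp_neg_mul_le {a : ℝ} (ha : 0 < a) (s : ℝ) :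
    s * Real.exp (-(a * s)) ≤ 1 / (a * Real.exp 1) := by
  have h := Real.mul_exp_neg_le_exp_neg_one (a * s)
  rw [Real.exp_neg 1, mul_assoc] at h
  rw [one_div, mul_inv, ← div_eq_inv_mul, le_div_iff₀ ha, mul_comm]
  exact h

-- `27/16 − (1−t)(1+t)³ = (t − 1/2)²((t + 3/2)² + 1/2)`
theorem one_sub_mul_one_add_pow_three_le (t : ℝ) : (1 - t) * (1 + t) ^ 3 ≤ 27 / 16 := by
  nlinarith [mul_nonneg (sq_nonneg (t - 1 / 2)) (sq_nonneg (t + 3 / 2)), sq_nonneg (t - 1 / 2)]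

theorem Real.cosh_sq_mul_one_sub_tanh_sq (r : ℝ) : Real.cosh r ^ 2 * (1 - Real.tanh r ^ 2) = 1 := by
  rw [Real.tanh_eq_sinh_div_cosh]
  field_simp
  linarith [Real.cosh_sq r]

theorem four_le_three_mul_sqrt_three_mul_cosh_pow_three_mul_one_sub_abs_tanh (r : ℝ) :
    4 ≤ 3 * √3 * (Real.cosh r ^ 3 * (1 - |Real.tanh r|)) := by
  set c := Real.cosh r
  set t := |Real.tanh r|
  have ht : t < 1 := Real.abs_tanh_lt_one r
  have hct : c ^ 2 * (1 - t ^ 2) = 1 := by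
    rw [sq_abs]; exact Real.cosh_sq_mul_one_sub_tanh_sq r
  have hpoly := one_sub_mul_one_add_pow_three_le t
  have hsq : (4 : ℝ) ^ 2 ≤ (3 * √3 * (c ^ 3 * (1 - t))) ^ 2 := by
    have h3 : √3 ^ 2 = 3 := Real.sq_sqrt (by norm_num)
    have hc6 : c ^ 6 * ((1 - t) ^ 3 * (1 + t) ^ 3) = 1 := by
      linear_combination (c ^ 4 * (1 - t ^ 2) ^ 2 + c ^ 2 * (1 - t ^ 2) + 1) * hct
    have := mul_le_mul_of_nonneg_left hpoly (by positivity : 0 ≤ c ^ 6 * (1 - t) ^ 2)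
    linear_combination -(9 * (c ^ 3 * (1 - t)) ^ 2) * h3 + 16 * this - 16 * hc6
  exact (pow_le_pow_iff_left₀ (by norm_num) (by have := Real.cosh_pos r; positivity)
    two_ne_zero).mp hsq

theorem div_cosh_pow_three_mul_exp_le (r : ℝ) {s u : ℝ} (hu : |u| ≤ s) :
    s / Real.cosh r ^ 3 * Real.exp (Real.tanh r * u - s) ≤ 3 * √3 / (4 * Real.exp 1) := by
  have hc := Real.cosh_pos r
  have hs : 0 ≤ s := (abs_nonneg u).trans hu
  have ht : 0 < 1 - |Real.tanh r| := sub_pos.mpr (Real.abs_tanh_lt_one r)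
  have htu : Real.tanh r * u ≤ |Real.tanh r| * s :=
    (le_abs_self _).trans ((abs_mul _ _).trans_le (by gcongr))
  calc s / Real.cosh r ^ 3 * Real.exp (Real.tanh r * u - s)
      ≤ s / Real.cosh r ^ 3 * Real.exp (-((1 - |Real.tanh r|) * s)) := by
        gcongr; linarith
    _ = s * Real.exp (-((1 - |Real.tanh r|) * s)) / Real.cosh r ^ 3 := by ring
    _ ≤ 1 / ((1 - |Real.tanh r|) * Real.exp 1) / Real.cosh r ^ 3 := by
        gcongr; exact Real.mul_exp_neg_mul_le ht s
    _ ≤ 3 * √3 / (4 * Real.exp 1) := by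
        rw [div_div, div_le_div_iff₀ (by positivity) (by positivity)]
        nlinarith [four_le_three_mul_sqrt_three_mul_cosh_pow_three_mul_one_sub_abs_tanh r,
          Real.exp_pos 1]

theorem norm_deriv_gaussianStellar_artanh_zero_sq :
    ‖deriv (gaussianStellar (Real.artanh (1 / 2)) 0 (√2 : ℝ)) 0‖ ^ 2 =
      3 * √3 / (4 * Real.exp 1) := by
  have hmem : (1 / 2 : ℝ) ∈ Set.Ioo (-1) 1 := by norm_num
  have h2 : √2 ^ 2 = 2 := Real.sq_sqrt (by norm_num)
  rw [norm_deriv_gaussianStellar_zero_sq, Real.cosh_artanh hmem, Real.tanh_artanh hmem,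
    Complex.norm_real, Real.norm_of_nonneg (Real.sqrt_nonneg _), Complex.ofReal_zero, zero_mul,
    Complex.exp_zero, one_mul, ← Complex.ofReal_pow, Complex.ofReal_re, h2]
  have h3 : √3 ^ 2 = 3 := Real.sq_sqrt (by norm_num)
  have hsqrt : √(1 - (1 / 2 : ℝ) ^ 2) = √3 / 2 := by
    rw [Real.sqrt_eq_iff_mul_self_eq_of_pos (by positivity)]
    linear_combination (1 / 4 : ℝ) * h3
  rw [hsqrt, show (1 / 2 * 2 - 2 : ℝ) = -1 by norm_num, Real.exp_neg]
  field_simp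
  linear_combination 4 * h3

/-- In the stellar representation `⟨1|S(ξ)D(α)|0⟩ = (∂_z F*)(0)/√(1!)`. -/
theorem stmt_15 :
    sSup (Set.range fun p : ℝ × ℝ × ℂ =>
        ‖deriv (gaussianStellar p.1 p.2.1 p.2.2) 0‖ ^ 2) =
      3 * Real.sqrt 3 / (4 * Real.exp 1) := by
  refine IsGreatest.csSup_eq ⟨⟨(Real.artanh (1 / 2), 0, (√2 : ℝ)),
    norm_deriv_gaussianStellar_artanh_zero_sq⟩, ?_⟩
  rintro _ ⟨⟨r, θ, α⟩, rfl⟩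
  exact (norm_deriv_gaussianStellar_zero_sq r θ α).trans_le <|
    div_cosh_pow_three_mul_exp_le r (abs_re_exp_mul_I_mul_sq_le θ α)
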